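/- arXiv:2605.27097 — 5 statements merged into one kernel-verified Lean document; each statement's English description precedes it below -/
import Mathlib

section
/- Suppose F : [T1, T2] → R is continuously differentiable with Lipschitz continuous derivative F', F ≥ 0 on [T1,T2], F(T1) = 0, and F''(t) ≤ p F(t) + q for almost every t ∈ [T1,T2], where p, q > 0. Then for every t ∈ [T1, T2], F'(t) ≤ (q/√p + F'(T1)) · exp(√p (t - T1)). -/
/-!
The substitution `G = F' + √p F` reduces the problem to first order. Since `F'` is Lipschitz, hence
absolutely continuous, and `F'' ≤ p F + q` a.e., `F'` grows on `[x, y]` by at most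
`∫ (p F + q)`; adding `√p (F y - F x) = √p ∫ F'` shows that `G` grows by at most `∫ (√p G + q)`.
Grönwall's inequality bounds `G t` by `F' T1 e^{√p (t - T1)} + (q / √p) (e^{√p (t - T1)} - 1)`,
and `F' ≤ G` because `F ≥ 0`.
-/

open MeasureTheory Set Filter
open scoped Topology

theorem AbsolutelyContinuousOnInterval.sub_le_integral_of_ae_hasDerivAt_le {f φ : ℝ → ℝ}
    {a b : ℝ} (hf : AbsolutelyContinuousOnInterval f a b) (hab : a ≤ b)
    (hφ : IntervalIntegrable φ volume a b)
    (h : ∀ᵐ t, t ∈ Icc a b → ∃ d, HasDerivAt f d t ∧ d ≤ φ t) :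
    f b - f a ≤ ∫ t in a..b, φ t := by
  rw [← hf.integral_deriv_eq_sub]
  refine intervalIntegral.integral_mono_ae_restrict hab hf.intervalIntegrable_deriv hφ
    ((ae_restrict_iff' measurableSet_Icc).2 ?_)
  filter_upwards [h] with t ht hmem
  obtain ⟨d, hd, hle⟩ := ht hmem
  rwa [hd.deriv]

theorem eventually_slope_lt_of_sub_le_integral {f φ : ℝ → ℝ} {x b r : ℝ} (hxb : x < b)
    (hφ : ContinuousOn φ (Icc x b)) (hf : ∀ y ∈ Ioc x b, f y - f x ≤ ∫ t in x..y, φ t)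
    (hr : φ x < r) : ∀ᶠ y in 𝓝[>] x, (y - x)⁻¹ * (f y - f x) < r := by
  have hφx : ContinuousWithinAt φ (Ici x) x :=
    (continuousWithinAt_Icc_iff_Ici hxb).1 (hφ x (left_mem_Icc.2 hxb.le))
  have hmeas : StronglyMeasurableAtFilter φ (𝓝[>] x) :=
    ((hφ.stronglyMeasurableAtFilter_nhdsWithin measurableSet_Icc x).filter_mono
      (by rw [nhdsWithin_Icc_eq_nhdsGE hxb]; exact nhdsWithin_mono _ Ioi_subset_Ici_self))
  have hderiv : HasDerivWithinAt (fun y => ∫ t in x..y, φ t) (φ x) (Ioi x) x :=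
    (intervalIntegral.integral_hasDerivWithinAt_right (s := Ici x) (t := Ioi x)
      IntervalIntegrable.refl hmeas (hφx.mono Ioi_subset_Ici_self)).mono Ioi_subset_Ici_self
  have hslope := (hasDerivWithinAt_iff_tendsto_slope' (lt_irrefl x)).1 hderiv
  filter_upwards [hslope.eventually (gt_mem_nhds hr), Ioc_mem_nhdsGT hxb] with y hy hyb
  calc (y - x)⁻¹ * (f y - f x) ≤ (y - x)⁻¹ * ∫ t in x..y, φ t :=
        mul_le_mul_of_nonneg_left (hf y hyb) (inv_nonneg.2 (sub_nonneg.2 hyb.1.le))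
    _ < r := by simpa [slope_def_field, div_eq_inv_mul] using hy

theorem le_gronwallBound_of_sub_le_integral {f φ : ℝ → ℝ} {δ K ε a b : ℝ}
    (hf : ContinuousOn f (Icc a b)) (hφ : ContinuousOn φ (Icc a b))
    (hincr : ∀ x ∈ Icc a b, ∀ y ∈ Icc a b, x ≤ y → f y - f x ≤ ∫ t in x..y, φ t)
    (ha : f a ≤ δ) (bound : ∀ x ∈ Ico a b, φ x ≤ K * f x + ε) :
    ∀ x ∈ Icc a b, f x ≤ gronwallBound δ K ε (x - a) := by
  refine le_gronwallBound_of_liminf_deriv_right_le hf (fun x hx r hr => ?_) ha bound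
  have hxI : x ∈ Icc a b := Ico_subset_Icc_self hx
  refine (eventually_slope_lt_of_sub_le_integral hx.2 (hφ.mono (Icc_subset_Icc_left hx.1))
    (fun y hy => hincr x hxI y (Icc_subset_Icc_left hxI.1 (Ioc_subset_Icc_self hy)) hy.1.le)
    hr).frequently

theorem add_sqrt_mul_sub_le_integral {F F' : ℝ → ℝ} {p q x y : ℝ} (hp : 0 ≤ p) (hxy : x ≤ y)
    (hderiv : ∀ t ∈ Icc x y, HasDerivAt F (F' t) t)
    (hF' : AbsolutelyContinuousOnInterval F' x y)
    (hsecond : ∀ᵐ t, t ∈ Icc x y → ∃ F'', HasDerivAt F' F'' t ∧ F'' ≤ p * F t + q) :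
    (F' y + √p * F y) - (F' x + √p * F x)
      ≤ ∫ t in x..y, √p * (F' t + √p * F t) + q := by
  have hFc : ContinuousOn F (uIcc x y) := fun t ht =>
    (hderiv t (uIcc_of_le hxy ▸ ht)).continuousAt.continuousWithinAt
  have hF'int : IntervalIntegrable F' volume x y := hF'.continuousOn.intervalIntegrable
  have hφint : IntervalIntegrable (fun t => p * F t + q) volume x y :=
    ((continuousOn_const.mul hFc).add continuousOn_const).intervalIntegrable
  have hF'incr := hF'.sub_le_integral_of_ae_hasDerivAt_le hxy hφint hsecond
  have hFincr : F y - F x = ∫ t in x..y, F' t :=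
    (intervalIntegral.integral_eq_sub_of_hasDerivAt
      (fun t ht => hderiv t (uIcc_of_le hxy ▸ ht)) hF'int).symm
  have hsplit : ∫ t in x..y, √p * (F' t + √p * F t) + q
      = (∫ t in x..y, p * F t + q) + √p * ∫ t in x..y, F' t := by
    rw [← intervalIntegral.integral_const_mul,
      ← intervalIntegral.integral_add hφint (hF'int.const_mul _)]
    refine intervalIntegral.integral_congr fun t _ => ?_
    linear_combination F t * Real.mul_self_sqrt hp
  rw [hsplit, ← hFincr]
  linarith

theorem second_order_gronwall_general (T1 T2 : ℝ)
    (F F' : ℝ → ℝ) (p q : ℝ) (hp : 0 < p) (hq : 0 < q) (K : NNReal)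
    (hderiv : ∀ t ∈ Set.Icc T1 T2, HasDerivAt F (F' t) t)
    (hLip : LipschitzOnWith K F' (Set.Icc T1 T2))
    (hFpos : ∀ t ∈ Set.Icc T1 T2, 0 ≤ F t)
    (hF0 : F T1 = 0)
    (hsecond : ∀ᵐ t ∂volume, t ∈ Set.Icc T1 T2 →
      ∃ F'' : ℝ, HasDerivAt F' F'' t ∧ F'' ≤ p * F t + q) :
    ∀ t ∈ Set.Icc T1 T2,
      F' t ≤ (q / Real.sqrt p + F' T1) * Real.exp (Real.sqrt p * (t - T1)) := by
  intro t ht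
  have hs : 0 < √p := Real.sqrt_pos.2 hp
  have hG : ContinuousOn (fun t => F' t + √p * F t) (Icc T1 T2) :=
    hLip.continuousOn.add <| continuousOn_const.mul fun t ht =>
      (hderiv t ht).continuousAt.continuousWithinAt
  have hGincr : ∀ x ∈ Icc T1 T2, ∀ y ∈ Icc T1 T2, x ≤ y →
      (F' y + √p * F y) - (F' x + √p * F x) ≤ ∫ t in x..y, √p * (F' t + √p * F t) + q := by
    intro x hx y hy hxy
    have hsub : Icc x y ⊆ Icc T1 T2 := Icc_subset_Icc hx.1 hy.2
    refine add_sqrt_mul_sub_le_integral hp.le hxy (fun t ht => hderiv t (hsub ht))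
      (hLip.mono (uIcc_of_le hxy ▸ hsub)).absolutelyContinuousOnInterval ?_
    filter_upwards [hsecond] with t ht htxy using ht (hsub htxy)
  have hGt := le_gronwallBound_of_sub_le_integral hG ((continuousOn_const.mul hG).add
    continuousOn_const) hGincr le_rfl (fun _ _ => le_rfl) t ht
  rw [gronwallBound_of_K_ne_0 hs.ne', hF0, mul_zero, add_zero] at hGt
  have hexp : 1 ≤ Real.exp (√p * (t - T1)) := Real.one_le_exp (by nlinarith [ht.1])
  nlinarith [hFpos t ht, div_pos hq hs]

theorem second_order_gronwall (T1 T2 : ℝ) (hT : T1 < T2)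
    (F F' : ℝ → ℝ) (p q : ℝ) (hp : 0 < p) (hq : 0 < q) (K : NNReal)
    (hderiv : ∀ t ∈ Set.Icc T1 T2, HasDerivAt F (F' t) t)
    (hLip : LipschitzOnWith K F' (Set.Icc T1 T2))
    (hFpos : ∀ t ∈ Set.Icc T1 T2, 0 ≤ F t)
    (hF0 : F T1 = 0)
    (hsecond : ∀ᵐ t ∂volume, t ∈ Set.Icc T1 T2 →
      ∃ F'' : ℝ, HasDerivAt F' F'' t ∧ F'' ≤ p * F t + q) :
    ∀ t ∈ Set.Icc T1 T2,
      F' t ≤ (q / Real.sqrt p + F' T1) * Real.exp (Real.sqrt p * (t - T1)) :=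
  second_order_gronwall_general T1 T2 F F' p q hp hq K hderiv hLip hFpos hF0 hsecond
end

section
/- Let f : [t0, ∞) → R be differentiable and satisfy f'(t) ≥ b(a² - f(t)²) for all t ≥ t0, where a, b > 0 and 0 < f(t0) ≤ a. Then for all t ≥ t0, f(t) ≥ a · tanh(a b (t - t0) + artanh(f(t0)/a)); in particular f(t) ≥ a·(1 - 2·exp(-2ab(t - t0))). -/
/-- The inverse hyperbolic tangent. -/
noncomputable def artanh (x : ℝ) : ℝ := (1/2) * Real.log ((1 + x) / (1 - x))

private lemma tanh_lt_one (x : ℝ) : Real.tanh x < 1 := by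
  rw [Real.tanh_eq_sinh_div_cosh, div_lt_one (Real.cosh_pos x),
    Real.sinh_eq, Real.cosh_eq]
  have := Real.exp_pos (-x)
  linarith

private lemma neg_one_lt_tanh (x : ℝ) : -1 < Real.tanh x := by
  rw [Real.tanh_eq_sinh_div_cosh, lt_div_iff₀ (Real.cosh_pos x),
    Real.sinh_eq, Real.cosh_eq]
  have := Real.exp_pos x
  linarith

set_option maxHeartbeats 1600000 in
theorem tanh_lower_bound_ode (t0 a b : ℝ) (ha : 0 < a) (hb : 0 < b)
    (f f' : ℝ → ℝ)
    (hderiv : ∀ t, t0 ≤ t → HasDerivAt f (f' t) t)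
    (hineq : ∀ t, t0 ≤ t → f' t ≥ b * (a ^ 2 - (f t) ^ 2))
    (h0pos : 0 < f t0) (h0le : f t0 ≤ a) :
    ∀ t, t0 ≤ t →
      f t ≥ a * Real.tanh (a * b * (t - t0) + artanh (f t0 / a)) ∧
      f t ≥ a * (1 - 2 * Real.exp (-2 * a * b * (t - t0))) := by
  -- continuity of f on [t0, ∞)
  have hcont : ∀ t, t0 ≤ t → ContinuousAt f t := fun t ht => (hderiv t ht).continuousAt
  -- Step 1 : positivity of f on [t0, ∞)
  have hpos : ∀ t, t0 ≤ t → 0 < f t := by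
    intro t ht
    by_contra hle
    push_neg at hle
    have htne : t0 < t := by
      rcases lt_or_eq_of_le ht with h | h
      · exact h
      · exfalso; rw [← h] at hle; linarith
    set S : Set ℝ := Set.Icc t0 t ∩ f ⁻¹' Set.Iic 0 with hS
    have hScl : IsClosed S := by
      apply ContinuousOn.preimage_isClosed_of_isClosed _ isClosed_Icc isClosed_Iic
      exact fun x hx => (hcont x hx.1).continuousWithinAt
    have hSne : S.Nonempty := ⟨t, ⟨ht, le_refl t⟩, hle⟩
    have hSbdd : BddBelow S := ⟨t0, fun x hx => hx.1.1⟩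
    set t1 := sInf S with ht1
    have ht1mem : t1 ∈ S := hScl.csInf_mem hSne hSbdd
    have ht1le : t0 ≤ t1 := ht1mem.1.1
    have hft1 : f t1 ≤ 0 := ht1mem.2
    have ht1gt : t0 < t1 := by
      rcases lt_or_eq_of_le ht1le with h | h
      · exact h
      · exfalso; rw [← h] at hft1; linarith
    -- on [t0, t1) f is positive
    have hbefore : ∀ s, t0 ≤ s → s < t1 → 0 < f s := by
      intro s hs0 hs1
      by_contra h
      push_neg at h
      have : s ∈ S := ⟨⟨hs0, le_trans hs1.le ht1mem.1.2⟩, h⟩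
      have := csInf_le hSbdd this
      linarith
    -- |f t1| < a, so find δ with |f| < a near t1
    have habs : |f t1| < a := by
      rw [abs_lt]
      constructor
      · -- f t1 ≥ 0 by continuity from the left
        have h0le' : 0 ≤ f t1 := by
          have hcw : ContinuousWithinAt f (Set.Ico t0 t1) t1 :=
            (hcont t1 ht1le).continuousWithinAt
          have hne : (nhdsWithin t1 (Set.Ico t0 t1)).NeBot := by
            apply mem_closure_iff_nhdsWithin_neBot.mp
            rw [closure_Ico (ne_of_lt ht1gt)]
            exact ⟨ht1le, le_refl _⟩
          haveI := hne
          exact ge_of_tendsto hcw (Filter.eventually_of_mem self_mem_nhdsWithin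
            fun s (hs : s ∈ Set.Ico t0 t1) => (hbefore s hs.1 hs.2).le)
        linarith
      · linarith
    obtain ⟨δ, hδpos, hδ⟩ : ∃ δ > 0, ∀ s, |s - t1| ≤ δ → |f s| < a := by
      have := (hcont t1 ht1le).tendsto
      have h2 : ∀ᶠ s in nhds t1, |f s| < a := by
        have : Set.Ioo (-(a:ℝ)) a ∈ nhds (f t1) := Ioo_mem_nhds (abs_lt.mp habs).1 (abs_lt.mp habs).2
        filter_upwards [(hcont t1 ht1le) this] with s hs
        exact abs_lt.mpr ⟨hs.1, hs.2⟩
      rcases Metric.eventually_nhds_iff.mp h2 with ⟨ε, hεpos, hε⟩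
      exact ⟨ε/2, by linarith, fun s hs => hε (by rw [Real.dist_eq]; linarith)⟩
    set δ' := min δ ((t1 - t0)/2) with hδ'
    have hδ'pos : 0 < δ' := lt_min hδpos (by linarith)
    have hsub : Set.Icc (t1 - δ') t1 ⊆ Set.Ici t0 := by
      intro s hs
      have : δ' ≤ (t1 - t0)/2 := min_le_right _ _
      simp only [Set.mem_Ici]
      have := hs.1
      linarith
    have hmono : StrictMonoOn f (Set.Icc (t1 - δ') t1) := by
      apply strictMonoOn_of_deriv_pos (convex_Icc _ _)
      · exact fun x hx => (hcont x (hsub hx)).continuousWithinAt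
      · intro x hx
        rw [interior_Icc] at hx
        have hx0 : t0 ≤ x := hsub ⟨hx.1.le, hx.2.le⟩
        rw [(hderiv x hx0).deriv]
        have habsx : |f x| < a := by
          apply hδ
          rw [abs_le]
          have h1 : δ' ≤ δ := min_le_left _ _
          constructor <;> [linarith [hx.1]; linarith [hx.2]]
        obtain ⟨hfl, hfr⟩ := abs_lt.mp habsx
        have : f x ^ 2 < a ^ 2 := by nlinarith
        have := hineq x hx0
        nlinarith
    have h1 : f (t1 - δ') < f t1 := by
      apply hmono ⟨le_refl _, by linarith⟩ ⟨by linarith, le_refl _⟩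
      linarith
    have h2 : 0 < f (t1 - δ') := by
      apply hbefore
      · have : δ' ≤ (t1 - t0)/2 := min_le_right _ _
        linarith
      · linarith
    linarith
  -- Step 2 : W(s) = (a - f s)/(a + f s) * exp(2ab(s - t0)) is antitone on [t0, ∞)
  set W : ℝ → ℝ := fun s => (a - f s) / (a + f s) * Real.exp (2*a*b*(s - t0)) with hWdef
  have hWderiv : ∀ s, t0 ≤ s → HasDerivAt W
      (((-(f' s) * (a + f s) - (a - f s) * f' s) / (a + f s)^2) * Real.exp (2*a*b*(s - t0))
        + (a - f s)/(a + f s) * (Real.exp (2*a*b*(s - t0)) * (2*a*b))) s := by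
    intro s hs
    have hfs := hderiv s hs
    have h1 := hfs.const_sub a
    have h2 := hfs.const_add a
    have hne : a + f s ≠ 0 := by have := hpos s hs; linarith
    have hq := h1.div h2 hne
    have hu : HasDerivAt (fun x : ℝ => 2*a*b*(x - t0)) (2*a*b) s := by
      simpa using ((hasDerivAt_id s).sub_const t0).const_mul (2*a*b)
    exact hq.mul hu.exp
  have hWanti : AntitoneOn W (Set.Ici t0) := by
    apply antitoneOn_of_deriv_nonpos (convex_Ici t0)
    · exact fun x hx => ((hWderiv x hx).continuousAt).continuousWithinAt
    · intro x hx
      rw [interior_Ici] at hx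
      exact (hWderiv x (le_of_lt hx)).differentiableAt.differentiableWithinAt
    · intro x hx
      rw [interior_Ici] at hx
      have hx0 : t0 ≤ x := le_of_lt hx
      rw [(hWderiv x hx0).deriv]
      have hfx := hpos x hx0
      have hafx : 0 < a + f x := by linarith
      have hkey := hineq x hx0
      have hexp := Real.exp_pos (2*a*b*(x - t0))
      have heq2 : (-(f' x) * (a + f x) - (a - f x) * f' x) / (a + f x)^2 * Real.exp (2*a*b*(x - t0))
          + (a - f x)/(a + f x) * (Real.exp (2*a*b*(x - t0)) * (2*a*b))
          = Real.exp (2*a*b*(x - t0)) * (2*a*(b*(a^2 - f x^2) - f' x)) / (a + f x)^2 := by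
        field_simp
        ring
      rw [heq2]
      apply div_nonpos_of_nonpos_of_nonneg _ (by positivity)
      apply mul_nonpos_of_nonneg_of_nonpos hexp.le
      nlinarith
  -- endgame
  intro t ht
  have hW_le : W t ≤ W t0 := hWanti Set.self_mem_Ici ht ht
  set E := Real.exp (-2*a*b*(t - t0)) with hEdef
  set w0 := (a - f t0)/(a + f t0) with hw0def
  have hW0 : W t0 = w0 := by simp [hWdef, hw0def]
  have hft := hpos t ht
  have haft : 0 < a + f t := by linarith
  have haf0 : 0 < a + f t0 := by linarith
  have hEpos : 0 < E := Real.exp_pos _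
  have hEinv : Real.exp (2*a*b*(t-t0)) * E = 1 := by
    rw [hEdef, ← Real.exp_add]
    rw [show 2*a*b*(t-t0) + -2*a*b*(t-t0) = 0 by ring, Real.exp_zero]
  have hwt : (a - f t)/(a + f t) ≤ w0 * E := by
    have h1 : (a - f t)/(a + f t) * Real.exp (2*a*b*(t-t0)) ≤ w0 := by
      rw [← hW0]; exact hW_le
    calc (a - f t)/(a + f t) = (a - f t)/(a + f t) * (Real.exp (2*a*b*(t-t0)) * E) := by
          rw [hEinv]; ring
      _ = ((a - f t)/(a + f t) * Real.exp (2*a*b*(t-t0))) * E := by ring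
      _ ≤ w0 * E := mul_le_mul_of_nonneg_right h1 hEpos.le
  set q := w0 * E with hqdef
  have hw0nn : 0 ≤ w0 := div_nonneg (by linarith) haf0.le
  have hw0le : w0 ≤ 1 := by rw [div_le_one haf0]; linarith
  have hq0 : 0 ≤ q := mul_nonneg hw0nn hEpos.le
  have hqE : q ≤ E := by
    rw [hqdef]
    nlinarith
  have hmain : a - f t ≤ q * (a + f t) := by
    rw [div_le_iff₀ haft] at hwt
    linarith
  clear_value W E w0 q
  constructor
  · -- the tanh bound
    set c := artanh (f t0 / a) with hcdef
    set X := a * b * (t - t0) + c with hXdef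
    rcases lt_or_eq_of_le h0le with hlt | heqa
    · -- f t0 < a : exact identification with tanh
      set x0 := f t0 / a with hx0def
      have hx0pos : 0 < x0 := div_pos h0pos ha
      have hx0lt : x0 < 1 := (div_lt_one ha).mpr hlt
      have hrpos : 0 < (1 + x0)/(1 - x0) := by
        apply div_pos <;> linarith
      have hc2 : Real.exp (-(2*c)) = w0 := by
        rw [hcdef]
        rw [show -(2 * artanh x0) = -Real.log ((1 + x0)/(1 - x0)) by rw [artanh]; ring]
        rw [Real.exp_neg, Real.exp_log hrpos]
        have h1x : (0:ℝ) < 1 + x0 := by linarith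
        rw [inv_div, hw0def, hx0def]
        rw [div_eq_div_iff h1x.ne' haf0.ne']
        rw [hx0def]
        field_simp
      have hqX : Real.exp (-(2*X)) = q := by
        rw [show -(2*X) = -2*a*b*(t-t0) + -(2*c) by rw [hXdef]; ring]
        rw [Real.exp_add, hc2, ← hEdef, hqdef]
        ring
      set u := Real.exp X with hudef
      have hu : 0 < u := Real.exp_pos _
      have hmq : q = u⁻¹ * u⁻¹ := by
        rw [← hqX, show -(2*X) = -X + -X by ring, Real.exp_add, Real.exp_neg, hudef]
      have h1q : 0 < 1 + q := by linarith
      clear_value X c u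
      have htanh : Real.tanh X = (1 - q)/(1 + q) := by
        rw [Real.tanh_eq_sinh_div_cosh, Real.sinh_eq, Real.cosh_eq, Real.exp_neg, ← hudef, hmq]
        rw [div_eq_div_iff (by positivity) (by positivity)]
        field_simp
      rw [htanh, ge_iff_le, ← sub_nonneg]
      have : f t - a * ((1 - q)/(1 + q)) = (f t * (1 + q) - a * (1 - q))/(1 + q) := by
        field_simp
      rw [this]
      apply div_nonneg _ h1q.le
      linarith
    · -- f t0 = a : then q = 0 and f t ≥ a > a tanh X
      have hw00 : w0 = 0 := by rw [hw0def, heqa]; simp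
      have hq00 : q = 0 := by rw [hqdef, hw00]; ring
      rw [hq00] at hmain
      have hfta : a ≤ f t := by linarith
      have h1 := tanh_lt_one X
      nlinarith [mul_lt_mul_of_pos_left h1 ha]
  · -- the exponential bound
    rcases le_or_gt (f t) a with hfa | hfa
    · nlinarith [mul_nonneg hq0 (sub_nonneg.mpr hfa), mul_le_mul_of_nonneg_right hqE ha.le]
    · nlinarith [mul_pos ha hEpos]
end

section
/- Let s_1,…,s_m be i.i.d. uniform on {±1} and, for each j, let (B_{i,j})_{i ∈ [n]} be i.i.d. Bernoulli(1/2), all variables independent. For j ∈ [m] and i ∈ [n] define A_{i,j} = B_{i,j}·1{sgn(y_i) = s_j}, where y_1,…,y_n are fixed nonzero reals with n_+ indices of positive sign and n_- of negative sign. Then the probability that two distinct columns j ≠ j' of A are equal and both nonzero is at most (m(m-1)/2)·(1/2)^{min(n_+,n_-)+1}. -/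
open MeasureTheory ProbabilityTheory
open scoped ENNReal

theorem prob_equal_nonzero_columns_le {Ω : Type*} [MeasurableSpace Ω] (μ : Measure Ω)
    [IsProbabilityMeasure μ] (n m : ℕ)
    (y : Fin n → ℝ) (hy : ∀ i, y i ≠ 0)
    (s : Fin m → Ω → Bool)     -- `s j ω = true` encodes the sign s_j = +1
    (B : Fin n → Fin m → Ω → Bool)
    (hmeas_s : ∀ j, Measurable (s j)) (hmeas_B : ∀ i j, Measurable (B i j))
    (hindep : iIndepFun
      (fun k : Sum (Fin m) (Fin n × Fin m) => Sum.elim (fun j => s j) (fun p => B p.1 p.2) k) μ)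
    (hs : ∀ j, μ {ω | s j ω = true} = 1/2)
    (hB : ∀ i j, μ {ω | B i j ω = true} = 1/2)
    (A : Fin n → Fin m → Ω → Bool)
    (hA : ∀ i j ω, A i j ω = (B i j ω && (decide (0 < y i) == s j ω))) :
    μ {ω | ∃ j j' : Fin m, j ≠ j' ∧ (∀ i, A i j ω = A i j' ω) ∧
        (∃ i, A i j ω = true) ∧ (∃ i, A i j' ω = true)} ≤
      (m * (m - 1) / 2 : ℝ≥0∞) *
        (1/2) ^ (min ((Finset.univ.filter (fun i => 0 < y i)).card)
                     ((Finset.univ.filter (fun i => y i < 0)).card) + 1) := by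
  classical
  set f : (Sum (Fin m) (Fin n × Fin m)) → Ω → Bool :=
    fun k => Sum.elim (fun j => s j) (fun p => B p.1 p.2) k with hf
  -- each coordinate takes each value with probability 1/2
  have hfmeas : ∀ k, Measurable (f k) := by
    rintro (j | p)
    · exact hmeas_s j
    · exact hmeas_B p.1 p.2
  have hhalf : ∀ (k : Sum (Fin m) (Fin n × Fin m)) (c : Bool), μ (f k ⁻¹' {c}) = 1/2 := by
    have htrue : ∀ k, μ (f k ⁻¹' {true}) = 1/2 := by
      rintro (j | p)
      · simpa [Set.preimage, f] using hs j
      · simpa [Set.preimage, f] using hB p.1 p.2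
    intro k c
    cases c
    · have hcompl : f k ⁻¹' {false} = (f k ⁻¹' {true})ᶜ := by
        ext ω; simp
      rw [hcompl, prob_compl_eq_one_sub ((hfmeas k) (measurableSet_singleton true)), htrue k]
      have := ENNReal.sub_half (a := 1) ENNReal.one_ne_top
      rw [this]
    · exact htrue k
  set np := (Finset.univ.filter (fun i : Fin n => 0 < y i)).card with hnp
  set nm := (Finset.univ.filter (fun i : Fin n => y i < 0)).card with hnm
  -- key bound for one pair of columns and one sign class
  have key : ∀ (j j' : Fin m), j ≠ j' → ∀ (b : Bool) (S : Finset (Fin n)),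
      μ {ω | s j ω = b ∧ s j' ω = b ∧ ∀ i ∈ S, B i j ω = B i j' ω}
        ≤ (1/2) ^ (S.card + 2) := by
    intro j j' hjj b S
    set T : Finset (Sum (Fin m) (Fin n × Fin m)) :=
      insert (Sum.inl j) (insert (Sum.inl j')
        ((S.image fun i => Sum.inr (i, j)) ∪ (S.image fun i => Sum.inr (i, j')))) with hT
    have hTcard : T.card = 2 * S.card + 2 := by
      have h1 : Sum.inl j' ∉ ((S.image fun i => Sum.inr (i, j)) ∪ (S.image fun i => Sum.inr (i, j'))) := by
        simp
      have h0 : (Sum.inl j : Sum (Fin m) (Fin n × Fin m)) ∉ insert (Sum.inl j')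
          ((S.image fun i => Sum.inr (i, j)) ∪ (S.image fun i => Sum.inr (i, j'))) := by
        simp [hjj]
      have hdisj : Disjoint (S.image fun i => Sum.inr (i, j) : Finset (Sum (Fin m) (Fin n × Fin m)))
          (S.image fun i => Sum.inr (i, j')) := by
        rw [Finset.disjoint_left]
        rintro a ha hb
        simp only [Finset.mem_image] at ha hb
        obtain ⟨i1, _, rfl⟩ := ha
        obtain ⟨i2, _, h⟩ := hb
        exact hjj (congrArg Prod.snd (Sum.inr.inj h)).symm
      have hinj1 : Function.Injective (fun i : Fin n => (Sum.inr (i, j) : Sum (Fin m) (Fin n × Fin m))) := by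
        intro a b h; simpa using h
      have hinj2 : Function.Injective (fun i : Fin n => (Sum.inr (i, j') : Sum (Fin m) (Fin n × Fin m))) := by
        intro a b h; simpa using h
      rw [hT, Finset.card_insert_of_notMem h0, Finset.card_insert_of_notMem h1,
        Finset.card_union_of_disjoint hdisj, Finset.card_image_of_injective _ hinj1,
        Finset.card_image_of_injective _ hinj2]
      ring
    -- union over assignments
    have hsub : {ω | s j ω = b ∧ s j' ω = b ∧ ∀ i ∈ S, B i j ω = B i j' ω} ⊆
        ⋃ t ∈ S.powerset, ⋂ k ∈ T, f k ⁻¹'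
          (Sum.elim (fun _ => ({b} : Set Bool)) (fun p => {decide (p.1 ∈ t)}) k) := by
      rintro ω ⟨h1, h2, h3⟩
      refine Set.mem_biUnion (Finset.mem_powerset.2 (Finset.filter_subset (fun i => B i j ω = true) S)) ?_
      set t := S.filter (fun i => B i j ω = true) with ht
      refine Set.mem_iInter₂.mpr ?_
      intro k hk
      rw [hT, Finset.mem_insert, Finset.mem_insert, Finset.mem_union] at hk
      rcases hk with rfl | rfl | hk | hk
      · simpa [f] using h1
      · simpa [f] using h2
      · rw [Finset.mem_image] at hk
        obtain ⟨i, hi, rfl⟩ := hk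
        have : B i j ω = decide (i ∈ t) := by
          cases hBv : B i j ω
          · simp [ht, Finset.mem_filter, hi, hBv]
          · simp [ht, Finset.mem_filter, hi, hBv]
        simpa [f] using this
      · rw [Finset.mem_image] at hk
        obtain ⟨i, hi, rfl⟩ := hk
        have : B i j' ω = decide (i ∈ t) := by
          rw [← h3 i hi]
          cases hBv : B i j ω
          · simp [ht, Finset.mem_filter, hi, hBv]
          · simp [ht, Finset.mem_filter, hi, hBv]
        simpa [f] using this
    -- each assignment event has measure (1/2)^(2|S|+2)
    have hmeaseq : ∀ t : Finset (Fin n),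
        μ (⋂ k ∈ T, f k ⁻¹'
          (Sum.elim (fun _ => ({b} : Set Bool)) (fun p => {decide (p.1 ∈ t)}) k)) = (1/2) ^ (2 * S.card + 2) := by
      intro t
      rw [hindep.measure_inter_preimage_eq_mul T (fun k hk => by
        rcases k with _ | p
        · exact measurableSet_singleton _
        · exact measurableSet_singleton _)]
      have : ∀ k ∈ T, μ (f k ⁻¹'
          (Sum.elim (fun _ => ({b} : Set Bool)) (fun p => {decide (p.1 ∈ t)}) k)) = 1/2 := by
        rintro (j0 | p) _
        · exact hhalf _ b
        · exact hhalf _ _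
      rw [Finset.prod_congr rfl this, Finset.prod_const, hTcard]
    calc μ {ω | s j ω = b ∧ s j' ω = b ∧ ∀ i ∈ S, B i j ω = B i j' ω}
        ≤ μ (⋃ t ∈ S.powerset, ⋂ k ∈ T, f k ⁻¹'
          (Sum.elim (fun _ => ({b} : Set Bool)) (fun p => {decide (p.1 ∈ t)}) k)) := measure_mono hsub
      _ ≤ ∑ t ∈ S.powerset, μ (⋂ k ∈ T, f k ⁻¹'
          (Sum.elim (fun _ => ({b} : Set Bool)) (fun p => {decide (p.1 ∈ t)}) k)) := measure_biUnion_finset_le _ _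
      _ = 2 ^ S.card * (1/2) ^ (2 * S.card + 2) := by
          rw [Finset.sum_congr rfl (fun t _ => hmeaseq t), Finset.sum_const, Finset.card_powerset,
            nsmul_eq_mul]
          norm_num
      _ = (1/2) ^ (S.card + 2) := by
          have h2 : (2 * S.card + 2) = S.card + (S.card + 2) := by ring
          rw [h2, pow_add, ← mul_assoc, ← mul_pow,
            ENNReal.mul_div_cancel' (by simp) (by simp), one_pow, one_mul]
  -- pairwise event bound
  have pair : ∀ (j j' : Fin m), j ≠ j' →
      μ {ω | (∀ i, A i j ω = A i j' ω) ∧ (∃ i, A i j ω = true) ∧ (∃ i, A i j' ω = true)}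
        ≤ (1/2) ^ (min np nm + 1) := by
    intro j j' hjj
    have hsub : {ω | (∀ i, A i j ω = A i j' ω) ∧ (∃ i, A i j ω = true) ∧ (∃ i, A i j' ω = true)} ⊆
        {ω | s j ω = true ∧ s j' ω = true ∧
            ∀ i ∈ Finset.univ.filter (fun i : Fin n => 0 < y i), B i j ω = B i j' ω} ∪
        {ω | s j ω = false ∧ s j' ω = false ∧
            ∀ i ∈ Finset.univ.filter (fun i : Fin n => y i < 0), B i j ω = B i j' ω} := by
      rintro ω ⟨hcol, ⟨i0, h0⟩, -⟩
      have h0' : A i0 j' ω = true := (hcol i0) ▸ h0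
      rw [hA] at h0 h0'
      rw [Bool.and_eq_true] at h0 h0'
      have hsj : s j ω = decide (0 < y i0) := (eq_of_beq h0.2).symm
      have hsj' : s j' ω = decide (0 < y i0) := (eq_of_beq h0'.2).symm
      by_cases hpos : 0 < y i0
      · left
        refine ⟨by simp [hsj, hpos], by simp [hsj', hpos], ?_⟩
        intro i hi
        rw [Finset.mem_filter] at hi
        have h1 := hcol i
        rw [hA, hA, hsj, hsj'] at h1
        simpa [hpos, hi.2] using h1
      · right
        have hneg0 : y i0 < 0 := lt_of_le_of_ne (not_lt.mp hpos) (hy i0)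
        refine ⟨by simp [hsj, hpos], by simp [hsj', hpos], ?_⟩
        intro i hi
        rw [Finset.mem_filter] at hi
        have hnegi : ¬ (0 < y i) := not_lt.mpr hi.2.le
        have h1 := hcol i
        rw [hA, hA, hsj, hsj'] at h1
        simpa [hpos, hnegi] using h1
    have hmin1 : (1/2:ℝ≥0∞) ^ (np + 2) ≤ (1/2) ^ (min np nm + 2) :=
      pow_le_pow_right_of_le_one' (by norm_num) (by omega)
    have hmin2 : (1/2:ℝ≥0∞) ^ (nm + 2) ≤ (1/2) ^ (min np nm + 2) :=
      pow_le_pow_right_of_le_one' (by norm_num) (by omega)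
    calc μ {ω | (∀ i, A i j ω = A i j' ω) ∧ (∃ i, A i j ω = true) ∧ (∃ i, A i j' ω = true)}
        ≤ μ ({ω | s j ω = true ∧ s j' ω = true ∧
            ∀ i ∈ Finset.univ.filter (fun i : Fin n => 0 < y i), B i j ω = B i j' ω} ∪
          {ω | s j ω = false ∧ s j' ω = false ∧
            ∀ i ∈ Finset.univ.filter (fun i : Fin n => y i < 0), B i j ω = B i j' ω}) := measure_mono hsub
      _ ≤ μ {ω | s j ω = true ∧ s j' ω = true ∧
            ∀ i ∈ Finset.univ.filter (fun i : Fin n => 0 < y i), B i j ω = B i j' ω} +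
          μ {ω | s j ω = false ∧ s j' ω = false ∧
            ∀ i ∈ Finset.univ.filter (fun i : Fin n => y i < 0), B i j ω = B i j' ω} := measure_union_le _ _
      _ ≤ (1/2) ^ (np + 2) + (1/2) ^ (nm + 2) := add_le_add (key j j' hjj true _) (key j j' hjj false _)
      _ ≤ (1/2) ^ (min np nm + 2) + (1/2) ^ (min np nm + 2) := add_le_add hmin1 hmin2
      _ = (1/2) ^ (min np nm + 1) := by
          rw [← two_mul, pow_succ _ (min np nm + 1), mul_comm, mul_assoc, one_div,
            ENNReal.inv_mul_cancel two_ne_zero (by norm_num), mul_one]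
  -- union bound over ordered pairs with j < j'
  set P : Finset (Fin m × Fin m) := Finset.univ.filter (fun p => p.1 < p.2) with hP
  have hcardP : 2 * P.card ≤ m * (m - 1) := by
    have himg : (P.image Prod.swap).card = P.card :=
      Finset.card_image_of_injective _ Prod.swap_injective
    have hdisj : Disjoint P (P.image Prod.swap) := by
      rw [Finset.disjoint_left]
      intro p hp hp'
      rw [hP, Finset.mem_filter] at hp
      simp only [Finset.mem_image] at hp'
      obtain ⟨q, hq, hqs⟩ := hp'
      rw [hP, Finset.mem_filter] at hq
      have : q.2 < q.1 := by
        have := hp.2; rw [← hqs] at this; simpa using this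
      exact absurd hq.2 (not_lt.mpr this.le)
    have hsubset : P ∪ P.image Prod.swap ⊆ (Finset.univ : Finset (Fin m)).offDiag := by
      intro p hp
      rw [Finset.mem_union] at hp
      rw [Finset.mem_offDiag]
      rcases hp with hp | hp
      · rw [hP, Finset.mem_filter] at hp
        exact ⟨Finset.mem_univ _, Finset.mem_univ _, ne_of_lt hp.2⟩
      · simp only [Finset.mem_image] at hp
        obtain ⟨q, hq, rfl⟩ := hp
        rw [hP, Finset.mem_filter] at hq
        exact ⟨Finset.mem_univ _, Finset.mem_univ _, ne_of_gt hq.2⟩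
    have := Finset.card_le_card hsubset
    rw [Finset.card_union_of_disjoint hdisj, himg, Finset.offDiag_card] at this
    have hmm : m * m - m = m * (m - 1) := by cases m with
      | zero => simp
      | succ k => simp [Nat.succ_sub_one, Nat.mul_succ, Nat.succ_mul]
    simp only [Finset.card_univ, Fintype.card_fin] at this
    omega
  have hPle : (P.card : ℝ≥0∞) ≤ (m * (m - 1) / 2 : ℝ≥0∞) := by
    have h1 : (P.card : ℝ≥0∞) ≤ ((m * (m-1) : ℕ) : ℝ≥0∞) / 2 := by
      rw [ENNReal.le_div_iff_mul_le (Or.inl two_ne_zero) (Or.inl (by norm_num))]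
      rw [mul_comm, ← Nat.cast_ofNat, ← Nat.cast_mul]
      exact_mod_cast hcardP
    calc (P.card : ℝ≥0∞) ≤ ((m * (m-1) : ℕ) : ℝ≥0∞) / 2 := h1
      _ = (m * (m - 1) / 2 : ℝ≥0∞) := by
          rw [Nat.cast_mul, ENNReal.natCast_sub, Nat.cast_one]
  have hsub : {ω | ∃ j j' : Fin m, j ≠ j' ∧ (∀ i, A i j ω = A i j' ω) ∧
        (∃ i, A i j ω = true) ∧ (∃ i, A i j' ω = true)} ⊆
      ⋃ p ∈ P, {ω | (∀ i, A i p.1 ω = A i p.2 ω) ∧ (∃ i, A i p.1 ω = true) ∧ (∃ i, A i p.2 ω = true)} := by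
    rintro ω ⟨j, j', hne, hcol, hnz1, hnz2⟩
    rcases lt_or_gt_of_ne hne with h | h
    · exact Set.mem_biUnion (Finset.mem_filter.mpr ⟨Finset.mem_univ (j, j'), h⟩)
        ⟨hcol, hnz1, hnz2⟩
    · exact Set.mem_biUnion (Finset.mem_filter.mpr ⟨Finset.mem_univ (j', j), h⟩)
        ⟨fun i => (hcol i).symm, hnz2, hnz1⟩
  calc μ {ω | ∃ j j' : Fin m, j ≠ j' ∧ (∀ i, A i j ω = A i j' ω) ∧
        (∃ i, A i j ω = true) ∧ (∃ i, A i j' ω = true)}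
      ≤ ∑ p ∈ P, μ {ω | (∀ i, A i p.1 ω = A i p.2 ω) ∧ (∃ i, A i p.1 ω = true) ∧ (∃ i, A i p.2 ω = true)} :=
        le_trans (measure_mono hsub) (measure_biUnion_finset_le _ _)
    _ ≤ ∑ _p ∈ P, (1/2 : ℝ≥0∞) ^ (min np nm + 1) := by
        refine Finset.sum_le_sum ?_
        intro p hp
        rw [hP, Finset.mem_filter] at hp
        exact pair p.1 p.2 (ne_of_lt hp.2)
    _ = (P.card : ℝ≥0∞) * (1/2) ^ (min np nm + 1) := by
        rw [Finset.sum_const, nsmul_eq_mul]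
    _ ≤ (m * (m - 1) / 2 : ℝ≥0∞) * (1/2) ^ (min np nm + 1) := mul_le_mul_left hPle _
end

section
/- Consider the two-layer ReLU network minimal ℓ2-norm interpolation problem on orthonormal data: for data (x_i, y_i)_{i=1}^n with x_i^⊤ x_{i'} = 1{i=i'} and y_i ≠ 0, the parameters θ* consisting of two neurons (a_+, w_+) = (c_+, c_+ · Σ_{i: y_i>0} (y_i/c_+²) x_i) with c_+² = √(Σ_{i: y_i>0} y_i²) and the analogous negative pair interpolate the data, and their squared ℓ2-norm satisfies (1/2)‖θ*‖² = √(Σ_{i: y_i>0} y_i²) + √(Σ_{i: y_i<0} y_i²). -/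
/-!
Orthonormality makes `⟪w, x j⟫` read off the single coefficient of `x j` in `w`, so the neuron
built from the positive labels fits them exactly, vanishes on the other data, and likewise for the
negative one. Rescaling a neuron `(a, w) ↦ (t a, w / t)` with `t > 0` does not change its output,
and `a² + ‖w‖²` is smallest when the neuron is balanced, `a² = ‖w‖²`; for a neuron fitting labels
`z_i` this common value is `√(∑ z_i²)`, which is how `c₊` and `c₋` are chosen.
-/

open scoped RealInnerProductSpace

open scoped InnerProductSpace ComplexConjugate in
theorem Orthonormal.inner_left_sum_ite {𝕜 E ι : Type*} [RCLike 𝕜] [NormedAddCommGroup E]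
    [InnerProductSpace 𝕜 E] [DecidableEq ι] {v : ι → E} (hv : Orthonormal 𝕜 v) (l : ι → 𝕜)
    (s : Finset ι) (j : ι) :
    ⟪∑ i ∈ s, l i • v i, v j⟫_𝕜 = if j ∈ s then conj (l j) else 0 := by
  simp [sum_inner, inner_smul_left, orthonormal_iff_ite.mp hv, Finset.sum_ite_eq']

section BalancedNeuron

variable {E ι : Type*} [NormedAddCommGroup E] [InnerProductSpace ℝ E] {x : ι → E}
  (s : Finset ι) (z : ι → ℝ) {c : ℝ}

theorem pow_four_eq_sum_sq_of_sq_eq_sqrt (hc : c ^ 2 = √(∑ i ∈ s, z i ^ 2)) :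
    c ^ 4 = ∑ i ∈ s, z i ^ 2 := by
  rw [show c ^ 4 = (c ^ 2) ^ 2 by ring, hc,
    Real.sq_sqrt (Finset.sum_nonneg fun i _ => sq_nonneg (z i))]

theorem inner_balanced_neuron [DecidableEq ι] (hx : Orthonormal ℝ x) (j : ι) :
    ⟪c • ∑ i ∈ s, (z i / c ^ 2) • x i, x j⟫ = if j ∈ s then z j / c else 0 := by
  rw [real_inner_smul_left, hx.inner_left_sum_ite, apply_ite (c * ·), mul_zero]
  rcases eq_or_ne c 0 with rfl | hc
  · simp
  · congr 1
    simp only [conj_trivial]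
    field_simp

theorem norm_sq_balanced_neuron (hx : Orthonormal ℝ x) (hc : c ^ 2 = √(∑ i ∈ s, z i ^ 2)) :
    ‖c • ∑ i ∈ s, (z i / c ^ 2) • x i‖ ^ 2 = c ^ 2 := by
  have hsum : ‖∑ i ∈ s, (z i / c ^ 2) • x i‖ ^ 2 = (∑ i ∈ s, z i ^ 2) / c ^ 4 := by
    rw [← real_inner_self_eq_norm_sq, hx.inner_sum, Finset.sum_div]
    refine Finset.sum_congr rfl fun i _ => ?_
    simp only [conj_trivial]
    ring
  rw [norm_smul, mul_pow, hsum, ← pow_four_eq_sum_sq_of_sq_eq_sqrt s z hc, Real.norm_eq_abs,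
    sq_abs]
  rcases eq_or_ne c 0 with rfl | hc0
  · simp
  · field_simp

theorem mul_relu_inner_balanced_neuron [DecidableEq ι] (hx : Orthonormal ℝ x)
    (hc : c ^ 2 = √(∑ i ∈ s, z i ^ 2)) (hc0 : 0 ≤ c) (hz : ∀ i ∈ s, 0 ≤ z i) (j : ι) :
    c * max 0 ⟪c • ∑ i ∈ s, (z i / c ^ 2) • x i, x j⟫ = if j ∈ s then z j else 0 := by
  rw [inner_balanced_neuron s z hx]
  split_ifs with hj
  · rw [max_eq_right (div_nonneg (hz j hj) hc0)]
    rcases eq_or_ne c 0 with rfl | hc'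
    · -- a neuron with `c = 0` only occurs when all its labels vanish
      have hzj : z j ^ 2 ≤ 0 := by
        simpa [← pow_four_eq_sum_sq_of_sq_eq_sqrt s z hc] using
          Finset.single_le_sum (fun i _ => sq_nonneg (z i)) hj
      simp [pow_eq_zero_iff two_ne_zero |>.mp (le_antisymm hzj (sq_nonneg _))]
    · field_simp
  · simp

end BalancedNeuron

theorem min_norm_two_neuron_interpolator_general {d n : ℕ}
    (x : Fin n → EuclideanSpace ℝ (Fin d)) (hx : Orthonormal ℝ x)
    (y : Fin n → ℝ)
    (cp cm : ℝ)
    (hcp : cp ^ 2 = Real.sqrt (∑ i ∈ Finset.univ.filter (fun i => 0 < y i), (y i) ^ 2))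
    (hcp0 : 0 ≤ cp)
    (hcm : cm ^ 2 = Real.sqrt (∑ i ∈ Finset.univ.filter (fun i => y i < 0), (y i) ^ 2))
    (hcm0 : 0 ≤ cm)
    (ap am : ℝ) (wp wm : EuclideanSpace ℝ (Fin d))
    (hap : ap = cp) (ham : am = -cm)
    (hwp : wp = cp • ∑ i ∈ Finset.univ.filter (fun i => 0 < y i), (y i / cp ^ 2) • x i)
    (hwm : wm = cm • ∑ i ∈ Finset.univ.filter (fun i => y i < 0), (-y i / cm ^ 2) • x i) :
    (∀ i, ap * max 0 ⟪wp, x i⟫ + am * max 0 ⟪wm, x i⟫ = y i) ∧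
    (1 / 2) * (ap ^ 2 + ‖wp‖ ^ 2 + am ^ 2 + ‖wm‖ ^ 2) =
      Real.sqrt (∑ i ∈ Finset.univ.filter (fun i => 0 < y i), (y i) ^ 2) +
      Real.sqrt (∑ i ∈ Finset.univ.filter (fun i => y i < 0), (y i) ^ 2) := by
  subst hap ham hwp hwm
  have hcm' : cm ^ 2 = √(∑ i ∈ Finset.univ.filter (fun i => y i < 0), (-y i) ^ 2) := by
    simpa only [neg_sq] using hcm
  refine ⟨fun j => ?_, ?_⟩
  · rw [mul_relu_inner_balanced_neuron _ y hx hcp hcp0 fun i hi => (Finset.mem_filter.1 hi).2.le,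
      neg_mul, mul_relu_inner_balanced_neuron _ (fun i => -y i) hx hcm' hcm0
        fun i hi => neg_nonneg.2 (Finset.mem_filter.1 hi).2.le]
    simp only [Finset.mem_filter, Finset.mem_univ, true_and]
    split_ifs <;> linarith
  · rw [norm_sq_balanced_neuron _ y hx hcp, norm_sq_balanced_neuron _ (fun i => -y i) hx hcm',
      neg_sq, ← hcp, ← hcm]
    ring

theorem min_norm_two_neuron_interpolator {d n : ℕ}
    (x : Fin n → EuclideanSpace ℝ (Fin d)) (hx : Orthonormal ℝ x)
    (y : Fin n → ℝ) (hy : ∀ i, y i ≠ 0)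
    (cp cm : ℝ)
    (hcp : cp ^ 2 = Real.sqrt (∑ i ∈ Finset.univ.filter (fun i => 0 < y i), (y i) ^ 2))
    (hcp0 : 0 ≤ cp)
    (hcm : cm ^ 2 = Real.sqrt (∑ i ∈ Finset.univ.filter (fun i => y i < 0), (y i) ^ 2))
    (hcm0 : 0 ≤ cm)
    (ap am : ℝ) (wp wm : EuclideanSpace ℝ (Fin d))
    (hap : ap = cp) (ham : am = -cm)
    (hwp : wp = cp • ∑ i ∈ Finset.univ.filter (fun i => 0 < y i), (y i / cp ^ 2) • x i)
    (hwm : wm = cm • ∑ i ∈ Finset.univ.filter (fun i => y i < 0), (-y i / cm ^ 2) • x i) :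
    (∀ i, ap * max 0 ⟪wp, x i⟫ + am * max 0 ⟪wm, x i⟫ = y i) ∧
    (1 / 2) * (ap ^ 2 + ‖wp‖ ^ 2 + am ^ 2 + ‖wm‖ ^ 2) =
      Real.sqrt (∑ i ∈ Finset.univ.filter (fun i => 0 < y i), (y i) ^ 2) +
      Real.sqrt (∑ i ∈ Finset.univ.filter (fun i => y i < 0), (y i) ^ 2) :=
  min_norm_two_neuron_interpolator_general x hx y cp cm hcp hcp0 hcm hcm0 ap am wp wm hap ham hwp
    hwm
end

section
/- Let a : [0,∞) → R and w : [0,∞) → R^d be differentiable and satisfy the balanced gradient-flow relations ȧ(t) = g(t)^⊤ w(t) and ẇ(t) = a(t)·g(t) for some function g : [0,∞) → R^d. If |a(0)| = ‖w(0)‖, then |a(t)| = ‖w(t)‖ for all t ≥ 0, and a(t)² - ‖w(t)‖² = a(0)² - ‖w(0)‖² in general; moreover if a(0) ≠ 0, then sgn(a(t)) = sgn(a(0)) for all t ≥ 0. -/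
open scoped RealInnerProductSpace

/-!
The derivative of `a² - ‖w‖²` is `2a⟪g, w⟫ - 2⟪w, a g⟫ = 0`, so this quantity is conserved.
Under balance `|a| = ‖w‖` we get `|ȧ| = |⟪g, w⟫| ≤ ‖g‖ |a|`, a linear differential inequality
for the scalar `a` alone; by a Grönwall-type argument a zero of `a` at a later time forces
`a(0) = 0`. Hence `a` never vanishes when `a(0) ≠ 0`, and keeps its sign by the intermediate
value theorem.
-/

open Set

theorem eq_zero_of_abs_deriv_le_mul_abs {f f' : ℝ → ℝ} {K s t : ℝ} (hst : s ≤ t)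
    (hf : ∀ x ∈ Icc s t, HasDerivAt f (f' x) x)
    (hbound : ∀ x ∈ Icc s t, |f' x| ≤ K * |f x|) (ht : f t = 0) : f s = 0 := by
  -- `f² e^{2Kx}` is nondecreasing, since `|f f'| ≤ K f²`.
  set h : ℝ → ℝ := fun x ↦ f x ^ 2 * Real.exp (2 * K * x)
  have hderiv : ∀ x ∈ Icc s t, HasDerivAt h
      (2 * Real.exp (2 * K * x) * (f x * f' x + K * f x ^ 2)) x := by
    intro x hx
    refine (((hf x hx).pow 2).mul ((hasDerivAt_id x).const_mul (2 * K)).exp).congr_deriv ?_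
    simp only [id, Nat.cast_ofNat, Pi.pow_apply]
    ring
  have hmono : MonotoneOn h (Icc s t) := by
    refine monotoneOn_of_hasDerivWithinAt_nonneg (convex_Icc s t)
      (fun x hx ↦ (hderiv x hx).continuousAt.continuousWithinAt)
      (fun x hx ↦ (hderiv x (interior_subset hx)).hasDerivWithinAt) fun x hx ↦ ?_
    have hx := interior_subset hx
    have hff' : |f x * f' x| ≤ K * f x ^ 2 := by
      rw [abs_mul, ← sq_abs (f x)]
      nlinarith [hbound x hx, abs_nonneg (f x)]
    have := neg_abs_le (f x * f' x)
    exact mul_nonneg (by positivity) (by linarith)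
  have hs : h s ≤ 0 := by
    simpa [h, ht] using hmono (left_mem_Icc.2 hst) (right_mem_Icc.2 hst) hst
  have : f s ^ 2 ≤ 0 := nonpos_of_mul_nonpos_left hs (Real.exp_pos _)
  exact pow_eq_zero_iff two_ne_zero |>.1 (le_antisymm this (sq_nonneg _))

theorem Real.sign_eq_of_continuousOn_of_ne_zero {f : ℝ → ℝ} {s t : ℝ}
    (hf : ContinuousOn f (uIcc s t)) (hne : ∀ x ∈ uIcc s t, f x ≠ 0) :
    Real.sign (f t) = Real.sign (f s) := by
  have h0 : (0 : ℝ) ∉ uIcc (f s) (f t) := fun h0 ↦ by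
    obtain ⟨x, hx, hfx⟩ := intermediate_value_uIcc hf h0
    exact hne x hx hfx
  rcases (hne s left_mem_uIcc).lt_or_gt with hs | hs <;>
    rcases (hne t right_mem_uIcc).lt_or_gt with ht | ht
  · rw [Real.sign_of_neg hs, Real.sign_of_neg ht]
  · exact absurd (mem_uIcc.2 (.inl ⟨hs.le, ht.le⟩)) h0
  · exact absurd (mem_uIcc.2 (.inr ⟨ht.le, hs.le⟩)) h0
  · rw [Real.sign_of_pos hs, Real.sign_of_pos ht]

section BalancedFlow

variable {E : Type*} [NormedAddCommGroup E] [InnerProductSpace ℝ E] {a : ℝ → ℝ} {w g : ℝ → E}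

theorem hasDerivAt_sq_sub_norm_sq {t : ℝ} (ha : HasDerivAt a ⟪g t, w t⟫ t)
    (hw : HasDerivAt w (a t • g t) t) :
    HasDerivAt (fun s ↦ a s ^ 2 - ‖w s‖ ^ 2) 0 t := by
  have hw2 : HasDerivAt (fun s ↦ ‖w s‖ ^ 2) (2 * ⟪w t, a t • g t⟫) t := by
    simpa only [← real_inner_self_eq_norm_sq, real_inner_comm (a t • g t), ← two_mul]
      using hw.inner ℝ hw
  refine ((ha.pow 2).sub hw2).congr_deriv ?_
  rw [real_inner_smul_right, real_inner_comm]
  simp only [Nat.cast_ofNat]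
  ring

theorem sq_sub_norm_sq_eq_of_hasDerivAt (ha : ∀ t, 0 ≤ t → HasDerivAt a ⟪g t, w t⟫ t)
    (hw : ∀ t, 0 ≤ t → HasDerivAt w (a t • g t) t) {t : ℝ} (ht : 0 ≤ t) :
    a t ^ 2 - ‖w t‖ ^ 2 = a 0 ^ 2 - ‖w 0‖ ^ 2 := by
  have hderiv x (hx : 0 ≤ x) := hasDerivAt_sq_sub_norm_sq (ha x hx) (hw x hx)
  exact constant_of_has_deriv_right_zero
    (fun x hx ↦ (hderiv x hx.1).continuousAt.continuousWithinAt)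
    (fun x hx ↦ (hderiv x hx.1).hasDerivWithinAt) t ⟨ht, le_rfl⟩

theorem eq_zero_of_abs_eq_norm_of_eq_zero {s t : ℝ} (hst : s ≤ t)
    (hg : ContinuousOn g (Icc s t)) (ha : ∀ x ∈ Icc s t, HasDerivAt a ⟪g x, w x⟫ x)
    (hbal : ∀ x ∈ Icc s t, |a x| = ‖w x‖) (ht : a t = 0) : a s = 0 := by
  obtain ⟨C, hC⟩ := isCompact_Icc.exists_bound_of_continuousOn hg
  refine eq_zero_of_abs_deriv_le_mul_abs (K := C) hst ha (fun x hx ↦ ?_) ht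
  calc |⟪g x, w x⟫| ≤ ‖g x‖ * ‖w x‖ := abs_real_inner_le_norm _ _
    _ = ‖g x‖ * |a x| := by rw [hbal x hx]
    _ ≤ C * |a x| := by gcongr; exact hC x hx

end BalancedFlow

theorem balanced_dynamics {d : ℕ}
    (a : ℝ → ℝ) (w : ℝ → EuclideanSpace ℝ (Fin d)) (g : ℝ → EuclideanSpace ℝ (Fin d))
    (hg : Continuous g)
    (hda : ∀ t, 0 ≤ t → HasDerivAt a ⟪g t, w t⟫ t)
    (hdw : ∀ t, 0 ≤ t → HasDerivAt w (a t • g t) t) :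
    (∀ t, 0 ≤ t → a t ^ 2 - ‖w t‖ ^ 2 = a 0 ^ 2 - ‖w 0‖ ^ 2) ∧
    (|a 0| = ‖w 0‖ → ∀ t, 0 ≤ t → |a t| = ‖w t‖) ∧
    (|a 0| = ‖w 0‖ → a 0 ≠ 0 → ∀ t, 0 ≤ t → Real.sign (a t) = Real.sign (a 0)) := by
  have conserved t (ht : 0 ≤ t) := sq_sub_norm_sq_eq_of_hasDerivAt hda hdw ht
  have balanced (h0 : |a 0| = ‖w 0‖) t (ht : 0 ≤ t) : |a t| = ‖w t‖ := by
    have : a t ^ 2 = ‖w t‖ ^ 2 := by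
      have := conserved t ht
      rw [← sq_abs (a 0), h0] at this
      linarith
    rwa [sq_eq_sq_iff_abs_eq_abs, abs_norm] at this
  refine ⟨conserved, balanced, fun h0 ha0 t ht ↦ ?_⟩
  have hne : ∀ x ∈ uIcc 0 t, a x ≠ 0 := by
    rw [uIcc_of_le ht]
    exact fun x hx hax ↦ ha0 <| eq_zero_of_abs_eq_norm_of_eq_zero hx.1 hg.continuousOn
      (fun y hy ↦ hda y hy.1) (fun y hy ↦ balanced h0 y hy.1) hax
  refine Real.sign_eq_of_continuousOn_of_ne_zero (fun x hx ↦ ?_) hne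
  rw [uIcc_of_le ht] at hx
  exact (hda x hx.1).continuousAt.continuousWithinAt
end
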